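/- arXiv:2602.17530 — 4 statements merged into one kernel-verified Lean document; each statement's English description precedes it below -/
import Mathlib

section
/- Let g₁,…,gₙ : ℝ → ℝ, β₀ ∈ ℝ, and define f(x) = 1 if β₀ + Σᵢ gᵢ(xᵢ) ≥ 0 and f(x) = 0 otherwise (assume f(x) = 1 for the given input x). For each i, let mᵢ = min over x̃ᵢ ∈ [xᵢ−ε, xᵢ+ε] of gᵢ(x̃ᵢ) (assume each gᵢ is continuous so the minimum exists), and Δᵢ = gᵢ(xᵢ) − mᵢ ≥ 0. Then a subset S ⊆ [n] is a sufficient explanation for ⟨f, x, ε⟩ (with respect to the ℓ∞ ball of radius ε) if and only if β₀ + Σᵢ∈S gᵢ(xᵢ) + Σᵢ∉S mᵢ ≥ 0, equivalently f(x)'s margin β₀ + Σᵢ gᵢ(xᵢ) ≥ Σᵢ∉S Δᵢ. -/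
/-! The score is additive across coordinates, so over the box the worst case of the free part
`∑_{i ∉ S} gᵢ(x̃ᵢ)` is attained by minimising each `gᵢ` separately on `[xᵢ - ε, xᵢ + ε]`;
`S` is sufficient exactly when the score stays nonnegative at that worst case. -/

/-- The vector equal to `x` on coordinates in `S` and equal to `x̃` on the complement. -/
def patch {n : ℕ} (S : Finset (Fin n)) (x xt : Fin n → ℝ) : Fin n → ℝ :=
  fun i => if i ∈ S then x i else xt i

/-- `S` is a sufficient explanation for `⟨f, x, ε⟩` w.r.t. the ℓ∞ ball of radius ε. -/
def Sufficient {n : ℕ} (f : (Fin n → ℝ) → Fin 2) (x : Fin n → ℝ) (ε : ℝ)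
    (S : Finset (Fin n)) : Prop :=
  ∀ xt : Fin n → ℝ, (∀ i, |x i - xt i| ≤ ε) → f (patch S x xt) = f x

theorem sum_comp_patch {M : Type*} [AddCommMonoid M] {n : ℕ} (S : Finset (Fin n))
    (x xt : Fin n → ℝ) (h : Fin n → ℝ → M) :
    ∑ i, h i (patch S x xt i) = ∑ i ∈ S, h i (x i) + ∑ i ∈ Sᶜ, h i (xt i) := by
  rw [← Finset.sum_add_sum_compl S]
  congr 1
  · exact Finset.sum_congr rfl fun i hi => by simp [patch, hi]
  · exact Finset.sum_congr rfl fun i hi => by simp [patch, Finset.mem_compl.mp hi]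

theorem isLeast_sum_image_pi {ι : Type*} (T : Finset ι) (g : ι → ℝ → ℝ) (s : ι → Set ℝ)
    (m : ι → ℝ) (hm : ∀ i, IsLeast (g i '' s i) (m i)) :
    IsLeast ((fun y => ∑ i ∈ T, g i (y i)) '' Set.univ.pi s) (∑ i ∈ T, m i) := by
  choose c hcs hgc using fun i => (hm i).1
  refine ⟨⟨c, fun i _ => hcs i, Finset.sum_congr rfl fun i _ => hgc i⟩, ?_⟩
  rintro _ ⟨y, hy, rfl⟩
  exact Finset.sum_le_sum fun i _ => (hm i).2 ⟨y i, hy i trivial, rfl⟩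

theorem sufficient_iff_forall_score_nonneg {n : ℕ} (F : (Fin n → ℝ) → ℝ)
    (f : (Fin n → ℝ) → Fin 2) (hf : ∀ y, f y = if 0 ≤ F y then 1 else 0)
    (x : Fin n → ℝ) (hfx : f x = 1) (ε : ℝ) (S : Finset (Fin n)) :
    Sufficient f x ε S ↔
      ∀ xt ∈ Set.univ.pi fun i => Set.Icc (x i - ε) (x i + ε), 0 ≤ F (patch S x xt) := by
  simp only [Sufficient, Set.mem_univ_pi, ← Set.mem_Icc_iff_abs_le, hfx, hf]
  refine forall_congr' fun xt => imp_congr_right fun _ => ?_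
  split_ifs with h <;> simp [h]

theorem stmt2_general {n : ℕ} (g : Fin n → ℝ → ℝ) (β₀ : ℝ) (x : Fin n → ℝ) (ε : ℝ) (m : Fin n → ℝ)
    (hm : ∀ i, IsLeast (g i '' Set.Icc (x i - ε) (x i + ε)) (m i))
    (f : (Fin n → ℝ) → Fin 2)
    (hf : ∀ y, f y = if 0 ≤ β₀ + ∑ i, g i (y i) then 1 else 0)
    (hfx : f x = 1) (S : Finset (Fin n)) :
    (Sufficient f x ε S ↔ 0 ≤ β₀ + ∑ i ∈ S, g i (x i) + ∑ i ∈ Sᶜ, m i) ∧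
    (Sufficient f x ε S ↔ ∑ i ∈ Sᶜ, (g i (x i) - m i) ≤ β₀ + ∑ i, g i (x i)) := by
  set box := Set.univ.pi fun i => Set.Icc (x i - ε) (x i + ε)
  have key : Sufficient f x ε S ↔ 0 ≤ β₀ + ∑ i ∈ S, g i (x i) + ∑ i ∈ Sᶜ, m i :=
    calc Sufficient f x ε S
        ↔ ∀ xt ∈ box, 0 ≤ β₀ + (∑ i ∈ S, g i (x i) + ∑ i ∈ Sᶜ, g i (xt i)) := by
          simp only [sufficient_iff_forall_score_nonneg _ f hf x hfx, sum_comp_patch, box]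
      _ ↔ -(β₀ + ∑ i ∈ S, g i (x i)) ∈ lowerBounds ((fun y => ∑ i ∈ Sᶜ, g i (y i)) '' box) := by
          simp only [mem_lowerBounds, Set.forall_mem_image, neg_le_iff_add_nonneg', add_assoc]
      _ ↔ 0 ≤ β₀ + ∑ i ∈ S, g i (x i) + ∑ i ∈ Sᶜ, m i := by
          rw [(isLeast_sum_image_pi Sᶜ g _ m hm).lowerBounds_eq, Set.mem_Iic,
            neg_le_iff_add_nonneg']
  refine ⟨key, key.trans ?_⟩
  rw [← Finset.sum_add_sum_compl S (fun i => g i (x i)), Finset.sum_sub_distrib]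
  constructor <;> intro h <;> linarith

/-- For a NAM binary classifier predicting `1` at `x`, a subset `S` is sufficient iff
`β₀ + Σ_{i∈S} gᵢ(xᵢ) + Σ_{i∉S} mᵢ ≥ 0`, equivalently the margin dominates `Σ_{i∉S} Δᵢ`. -/
theorem stmt2 {n : ℕ} (g : Fin n → ℝ → ℝ) (β₀ : ℝ) (x : Fin n → ℝ) (ε : ℝ) (hε : 0 < ε)
    (hg : ∀ i, Continuous (g i)) (m : Fin n → ℝ)
    (hm : ∀ i, IsLeast (g i '' Set.Icc (x i - ε) (x i + ε)) (m i))
    (f : (Fin n → ℝ) → Fin 2)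
    (hf : ∀ y, f y = if 0 ≤ β₀ + ∑ i, g i (y i) then 1 else 0)
    (hfx : f x = 1) (S : Finset (Fin n)) :
    (Sufficient f x ε S ↔ 0 ≤ β₀ + ∑ i ∈ S, g i (x i) + ∑ i ∈ Sᶜ, m i) ∧
    (Sufficient f x ε S ↔ ∑ i ∈ Sᶜ, (g i (x i) - m i) ≤ β₀ + ∑ i, g i (x i)) :=
  stmt2_general g β₀ x ε m hm f hf hfx S
end

section
/- Let g₁,…,gₙ : ℝ → ℝ be continuous, β₀ ∈ ℝ, f(x) = step(β₀ + Σᵢ gᵢ(xᵢ)) with f(x) = 1, and Δᵢ = gᵢ(xᵢ) − min_{|t−xᵢ|≤ε} gᵢ(t). Assume the features are reindexed so that Δ₁ ≥ Δ₂ ≥ ⋯ ≥ Δₙ. If the prefix set S = {1,…,k} is not a sufficient explanation for ⟨f, x, ε⟩, then no subset S' ⊆ [n] of cardinality k is a sufficient explanation. -/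
/-- The prefix set `{1,…,k}` of the features (0-indexed: indices `< k`). -/
def prefixSet (n k : ℕ) : Finset (Fin n) :=
  Finset.univ.filter (fun i : Fin n => (i : ℕ) < k)

open Finset

lemma Fin.val_le_of_strictMono {k n : ℕ} {f : Fin k → Fin n} (hf : StrictMono f) (i : Fin k) :
    (i : ℕ) ≤ f i := by
  have h := card_le_card_of_injOn f (s := Iic i) (t := Iic (f i))
    (fun _ hj => mem_Iic.2 (hf.monotone (mem_Iic.1 hj))) hf.injective.injOn
  simpa using h

lemma prefixSet_eq_map_castLEEmb {n k : ℕ} (hk : k ≤ n) :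
    prefixSet n k = univ.map (Fin.castLEEmb hk) := by
  ext i
  simp only [prefixSet, mem_filter, mem_univ, true_and, mem_map, Fin.castLEEmb_apply]
  exact ⟨fun h => ⟨⟨i, h⟩, rfl⟩, by rintro ⟨j, rfl⟩; exact j.isLt⟩

section Rearrangement

variable {M : Type*} {n k : ℕ} {Δ : Fin n → M} {S : Finset (Fin n)}

lemma sum_le_sum_prefixSet [AddCommMonoid M] [PartialOrder M] [IsOrderedAddMonoid M]
    (hΔ : Antitone Δ) (hS : #S = k) :
    ∑ i ∈ S, Δ i ≤ ∑ i ∈ prefixSet n k, Δ i := by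
  have hk : k ≤ n := hS ▸ (card_le_univ S).trans_eq (Fintype.card_fin n)
  let e := S.orderEmbOfFin hS
  calc ∑ i ∈ S, Δ i = ∑ j : Fin k, Δ (e j) := by
        rw [← map_orderEmbOfFin_univ S hS, sum_map]; rfl
    _ ≤ ∑ j : Fin k, Δ (Fin.castLE hk j) :=
        sum_le_sum fun j _ => hΔ (Fin.val_le_of_strictMono e.strictMono j)
    _ = ∑ i ∈ prefixSet n k, Δ i := by
        rw [prefixSet_eq_map_castLEEmb hk, sum_map]; rfl

lemma sum_compl_prefixSet_le [AddCommGroup M] [PartialOrder M] [IsOrderedAddMonoid M]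
    (hΔ : Antitone Δ) (hS : #S = k) :
    ∑ i ∈ (prefixSet n k)ᶜ, Δ i ≤ ∑ i ∈ Sᶜ, Δ i := by
  refine le_of_add_le_add_right (a := ∑ i ∈ prefixSet n k, Δ i) ?_
  rw [sum_compl_add_sum, ← sum_compl_add_sum S]
  exact add_le_add_right (sum_le_sum_prefixSet hΔ hS) _

end Rearrangement

section Sufficiency

variable {n : ℕ}

lemma sum_patch {M : Type*} [AddCommMonoid M] (h : Fin n → ℝ → M) (S : Finset (Fin n))
    (x xt : Fin n → ℝ) :
    ∑ i, h i (patch S x xt i) = ∑ i ∈ S, h i (x i) + ∑ i ∈ Sᶜ, h i (xt i) := by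
  rw [← sum_add_sum_compl S]
  congr 1 <;> refine sum_congr rfl fun i hi => ?_ <;> simp_all [patch]

theorem sufficient_iff_sum_compl_le {g : Fin n → ℝ → ℝ} {β₀ : ℝ} {x : Fin n → ℝ} {ε : ℝ}
    {m : Fin n → ℝ} (hm : ∀ i, IsLeast (g i '' Set.Icc (x i - ε) (x i + ε)) (m i))
    {f : (Fin n → ℝ) → Fin 2} (hf : ∀ y, f y = if 0 ≤ β₀ + ∑ i, g i (y i) then 1 else 0)
    (hfx : f x = 1) (S : Finset (Fin n)) :
    Sufficient f x ε S ↔ ∑ i ∈ Sᶜ, (g i (x i) - m i) ≤ β₀ + ∑ i, g i (x i) := by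
  have hf_eq_one : ∀ y, f y = 1 ↔ 0 ≤ β₀ + ∑ i, g i (y i) := fun y => by
    rw [hf]; split_ifs <;> simp_all
  have hworst : ∑ i ∈ Sᶜ, (g i (x i) - m i) ≤ β₀ + ∑ i, g i (x i) ↔
      0 ≤ β₀ + (∑ i ∈ S, g i (x i) + ∑ i ∈ Sᶜ, m i) := by
    rw [sum_sub_distrib, ← sum_add_sum_compl S]
    constructor <;> intro <;> linarith
  simp only [hworst, Sufficient, hfx, hf_eq_one, sum_patch, Set.mem_Icc_iff_abs_le]
  constructor
  · intro hsuff
    choose t ht hgt using fun i => (hm i).1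
    simpa only [hgt] using hsuff t ht
  · intro hpos xt hxt
    have hmin : ∑ i ∈ Sᶜ, m i ≤ ∑ i ∈ Sᶜ, g i (xt i) :=
      sum_le_sum fun i _ => (hm i).2 ⟨xt i, hxt i, rfl⟩
    linarith

end Sufficiency

theorem stmt4_general {n : ℕ} (g : Fin n → ℝ → ℝ) (β₀ : ℝ) (x : Fin n → ℝ) (ε : ℝ)
    (m : Fin n → ℝ)
    (hm : ∀ i, IsLeast (g i '' Set.Icc (x i - ε) (x i + ε)) (m i))
    (f : (Fin n → ℝ) → Fin 2)
    (hf : ∀ y, f y = if 0 ≤ β₀ + ∑ i, g i (y i) then 1 else 0)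
    (hfx : f x = 1)
    (hsorted : ∀ i j : Fin n, i ≤ j → g j (x j) - m j ≤ g i (x i) - m i)
    (k : ℕ)
    (hpref : ¬ Sufficient f x ε (prefixSet n k)) :
    ∀ S' : Finset (Fin n), S'.card = k → ¬ Sufficient f x ε S' := by
  intro S' hS' hsuff
  apply hpref
  rw [sufficient_iff_sum_compl_le hm hf hfx] at hsuff ⊢
  exact (sum_compl_prefixSet_le (fun i j hij => hsorted i j hij) hS').trans hsuff

/-- With features sorted by descending importance `Δᵢ = gᵢ(xᵢ) − min_{|t−xᵢ|≤ε} gᵢ(t)`,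
if the top-`k` prefix is not sufficient then no subset of cardinality `k` is sufficient. -/
theorem stmt4 {n : ℕ} (g : Fin n → ℝ → ℝ) (β₀ : ℝ) (x : Fin n → ℝ) (ε : ℝ) (hε : 0 < ε)
    (hg : ∀ i, Continuous (g i)) (m : Fin n → ℝ)
    (hm : ∀ i, IsLeast (g i '' Set.Icc (x i - ε) (x i + ε)) (m i))
    (f : (Fin n → ℝ) → Fin 2)
    (hf : ∀ y, f y = if 0 ≤ β₀ + ∑ i, g i (y i) then 1 else 0)
    (hfx : f x = 1)
    (hsorted : ∀ i j : Fin n, i ≤ j → g j (x j) - m j ≤ g i (x i) - m i)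
    (k : ℕ) (hk : k ≤ n)
    (hpref : ¬ Sufficient f x ε (prefixSet n k)) :
    ∀ S' : Finset (Fin n), S'.card = k → ¬ Sufficient f x ε S' :=
  stmt4_general g β₀ x ε m hm f hf hfx hsorted k hpref
end

section
/- Weighted gadget maximization: let h : [0,1]ⁿ → ℝ be m-Lipschitz with respect to the ℓ₁ norm, let z(t) = max(0, 1/2 − t) + max(0, t − 1/2), let C > m, and define y(x) = C·Σᵢ z(xᵢ) + h(x). Then max_{x ∈ [0,1]ⁿ} y(x) = Cn/2 + max_{x ∈ {0,1}ⁿ} h(x); in particular every maximizer of y over [0,1]ⁿ lies in {0,1}ⁿ when the maximizer is unique coordinate-wise, and more precisely: for any x ∈ [0,1]ⁿ with some xᵢ ∉ {0,1}, there exists x' ∈ [0,1]ⁿ (rounding xᵢ to the nearer endpoint) with y(x') > y(x). -/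
/-- The Bool* gadget `z(t) = max(0, 1/2 − t) + max(0, t − 1/2)`. -/
noncomputable def zgad (t : ℝ) : ℝ := max 0 (1 / 2 - t) + max 0 (t - 1 / 2)

lemma zgad_abs (t : ℝ) : zgad t = |t - 1 / 2| := by
  unfold zgad
  rcases le_total t (1 / 2) with ht | ht
  · rw [abs_of_nonpos (by linarith), max_eq_right (by linarith), max_eq_left (by linarith)]
    ring
  · rw [abs_of_nonneg (by linarith), max_eq_left (by linarith), max_eq_right (by linarith)]
    ring

lemma zgad_le {t : ℝ} (ht : t ∈ Set.Icc (0 : ℝ) 1) : zgad t ≤ 1 / 2 := by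
  obtain ⟨h0, h1⟩ := ht
  rw [zgad_abs, abs_le]
  constructor <;> linarith

lemma zgad_bool {t : ℝ} (ht : t = 0 ∨ t = 1) : zgad t = 1 / 2 := by
  rcases ht with rfl | rfl <;> rw [zgad_abs] <;> norm_num

/-- rounding to the nearer endpoint -/
noncomputable def rnd (t : ℝ) : ℝ := if t ≤ 1 / 2 then 0 else 1

lemma rnd_bool (t : ℝ) : rnd t = 0 ∨ rnd t = 1 := by
  unfold rnd; split <;> simp

lemma rnd_mem (t : ℝ) : rnd t ∈ Set.Icc (0 : ℝ) 1 := by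
  unfold rnd; split <;> norm_num

lemma rnd_dist {t : ℝ} (ht : t ∈ Set.Icc (0 : ℝ) 1) :
    |t - rnd t| = 1 / 2 - zgad t := by
  obtain ⟨h0, h1⟩ := ht
  rw [zgad_abs]; unfold rnd
  split_ifs with hle
  · rw [show t - 0 = t by ring, abs_of_nonneg h0, abs_of_nonpos (by linarith)]; ring
  · rw [abs_of_nonpos (by linarith), abs_of_nonneg (by linarith)]; ring

/-- Weighted gadget maximization: for `h` `m`-Lipschitz w.r.t. ℓ₁ on `[0,1]ⁿ` and `C > m`,
the maximum of `y(x) = C·Σᵢ z(xᵢ) + h(x)` over `[0,1]ⁿ` equals `Cn/2` plus the maximum of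
`h` over `{0,1}ⁿ`; moreover any point with a non-Boolean coordinate can be strictly improved. -/
theorem stmt12 (n : ℕ) (h : (Fin n → ℝ) → ℝ) (m C : ℝ) (hC : m < C)
    (hLip : ∀ x y : Fin n → ℝ, (∀ i, x i ∈ Set.Icc (0 : ℝ) 1) →
      (∀ i, y i ∈ Set.Icc (0 : ℝ) 1) → |h x - h y| ≤ m * ∑ i, |x i - y i|)
    (y : (Fin n → ℝ) → ℝ)
    (hy : ∀ x, y x = C * (∑ i, zgad (x i)) + h x) :
    sSup (y '' {x : Fin n → ℝ | ∀ i, x i ∈ Set.Icc (0 : ℝ) 1}) =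
      C * n / 2 + sSup (h '' {x : Fin n → ℝ | ∀ i, x i = 0 ∨ x i = 1}) ∧
    ∀ x : Fin n → ℝ, (∀ i, x i ∈ Set.Icc (0 : ℝ) 1) →
      ∀ i : Fin n, ¬ (x i = 0 ∨ x i = 1) →
        ∃ x' : Fin n → ℝ, (∀ i, x' i ∈ Set.Icc (0 : ℝ) 1) ∧ y x < y x' := by
  set Bset : Set (Fin n → ℝ) := {x | ∀ i, x i = 0 ∨ x i = 1} with hBset
  set Cube : Set (Fin n → ℝ) := {x | ∀ i, x i ∈ Set.Icc (0 : ℝ) 1} with hCube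
  have hBsub : Bset ⊆ Cube := by
    intro x hx i
    rcases hx i with h0 | h1
    · rw [h0]; norm_num
    · rw [h1]; norm_num
  have hBfin : Bset.Finite := by
    have : Bset ⊆ Set.pi Set.univ (fun _ : Fin n => ({0, 1} : Set ℝ)) := by
      intro x hx i _
      rcases hx i with h0 | h1
      · exact Or.inl h0
      · exact Or.inr h1
    exact Set.Finite.subset (Set.Finite.pi fun _ => Set.toFinite _) this
  have hBne : (h '' Bset).Nonempty :=
    ⟨h (fun _ => 0), Set.mem_image_of_mem h (fun _ => Or.inl rfl)⟩
  set B : ℝ := sSup (h '' Bset) with hB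
  have hBmem : B ∈ h '' Bset := hBne.csSup_mem (hBfin.image h)
  -- rounding map
  set R : (Fin n → ℝ) → (Fin n → ℝ) := fun x i => rnd (x i) with hR
  have hRB : ∀ x, R x ∈ Bset := fun x i => rnd_bool (x i)
  -- key inequality
  have key : ∀ x ∈ Cube, y x ≤ C * n / 2 + h (R x) := by
    intro x hx
    have h1 : h x ≤ h (R x) + m * ∑ i, |x i - R x i| := by
      have := hLip x (R x) hx (hBsub (hRB x))
      have h2 := le_of_abs_le this
      linarith
    have h2 : (∑ i, |x i - R x i|) = ∑ i, (1 / 2 - zgad (x i)) :=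
      Finset.sum_congr rfl fun i _ => rnd_dist (hx i)
    have h3 : C * (∑ i, zgad (x i)) + m * ∑ i, (1 / 2 - zgad (x i)) ≤ C * n / 2 := by
      calc C * (∑ i, zgad (x i)) + m * ∑ i, (1 / 2 - zgad (x i))
          = ∑ i, (C * zgad (x i) + m * (1 / 2 - zgad (x i))) := by
            rw [Finset.mul_sum, Finset.mul_sum, ← Finset.sum_add_distrib]
        _ ≤ ∑ _i : Fin n, C * (1 / 2) := by
            apply Finset.sum_le_sum
            intro i _
            have hz := zgad_le (hx i)
            nlinarith [mul_nonneg (sub_pos.mpr hC).le (sub_nonneg.mpr hz)]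
        _ = C * n / 2 := by
            rw [Finset.sum_const, Finset.card_univ, Fintype.card_fin, nsmul_eq_mul]
            ring
    rw [hy x]
    rw [h2] at h1
    linarith
  have hub : ∀ a ∈ y '' Cube, a ≤ C * n / 2 + B := by
    rintro a ⟨x, hx, rfl⟩
    have := key x hx
    have hle : h (R x) ≤ B :=
      le_csSup ((hBfin.image h).bddAbove) (Set.mem_image_of_mem h (hRB x))
    linarith
  have hAne : (y '' Cube).Nonempty :=
    ⟨y (fun _ => 0), Set.mem_image_of_mem y (fun _ => by norm_num)⟩
  have hAbdd : BddAbove (y '' Cube) := ⟨C * n / 2 + B, hub⟩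
  obtain ⟨xs, hxsB, hxsval⟩ := hBmem
  have hyxs : y xs = C * n / 2 + B := by
    rw [hy xs]
    have : (∑ i, zgad (xs i)) = ∑ _i : Fin n, (1 / 2 : ℝ) :=
      Finset.sum_congr rfl fun i _ => zgad_bool (hxsB i)
    rw [this, Finset.sum_const, Finset.card_univ, Fintype.card_fin, nsmul_eq_mul, hxsval]
    ring
  constructor
  · apply le_antisymm
    · exact csSup_le hAne hub
    · rw [← hyxs]
      exact le_csSup hAbdd (Set.mem_image_of_mem y (hBsub hxsB))
  · intro x hx i hi
    set a : ℝ := rnd (x i) with ha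
    set x' : Fin n → ℝ := Function.update x i a with hx'
    have hx'mem : ∀ j, x' j ∈ Set.Icc (0 : ℝ) 1 := by
      intro j
      by_cases hj : j = i
      · subst hj; rw [hx', Function.update_self]; exact rnd_mem _
      · rw [hx', Function.update_of_ne hj]; exact hx j
    refine ⟨x', hx'mem, ?_⟩
    set δ : ℝ := 1 / 2 - zgad (x i) with hδ
    have hδeq : |x i - a| = δ := rnd_dist (hx i)
    have hδpos : 0 < δ := by
      rw [← hδeq]
      apply abs_pos.mpr
      intro hcontra
      have : x i = a := by linarith [sub_eq_zero.mp hcontra]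
      rcases rnd_bool (x i) with h0 | h1
      · exact hi (Or.inl (this.trans h0))
      · exact hi (Or.inr (this.trans h1))
    -- sum of zgad changes by δ
    have hsumz : (∑ j, zgad (x' j)) = (∑ j, zgad (x j)) + δ := by
      have heq : (fun j => zgad (x' j)) = Function.update (fun j => zgad (x j)) i (zgad a) := by
        funext j
        by_cases hj : j = i
        · subst hj; rw [hx', Function.update_self, Function.update_self]
        · rw [hx', Function.update_of_ne hj, Function.update_of_ne hj]
      have hza : zgad a = 1 / 2 := zgad_bool (rnd_bool _)
      rw [heq, Finset.sum_update_of_mem (Finset.mem_univ i), hza]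
      rw [← Finset.add_sum_erase Finset.univ (fun j => zgad (x j)) (Finset.mem_univ i),
        Finset.erase_eq]
      ring
    -- sum of abs differences is δ
    have hsumd : (∑ j, |x j - x' j|) = δ := by
      have heq : (fun j => |x j - x' j|) = Function.update (fun _ : Fin n => (0 : ℝ)) i δ := by
        funext j
        by_cases hj : j = i
        · subst hj; rw [hx', Function.update_self, Function.update_self, hδeq]
        · rw [hx', Function.update_of_ne hj, Function.update_of_ne hj, sub_self, abs_zero]
      rw [heq, Finset.sum_update_of_mem (Finset.mem_univ i), Finset.sum_const_zero]
      ring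
    have hlip := hLip x x' hx hx'mem
    rw [hsumd] at hlip
    have h4 : h x - h x' ≤ m * δ := le_of_abs_le hlip
    rw [hy x, hy x', hsumz]
    nlinarith [mul_pos (sub_pos.mpr hC) hδpos]
end

section
/- Reduction counting argument: let m ≥ 2, and let V ∈ ℤ with 1 ≤ V ≤ m (V represents the MaxSAT value). Consider a NAM with m² identical univariate components each of maximum value V over the perturbation range, with intercept β₀ = m², such that a subset S of size k is sufficient iff (m² − k)·V ≤ m². Let k* be the minimal sufficient size. Then, whenever k* ≥ 1, m²/(m² − (k*−1)) < V ≤ m²/(m² − k*); moreover m² − k* ≥ m, so m²/(m²−k*) − m²/(m²−k*+1) = m²/((m²−k*)(m²−k*+1)) < 1, hence V is the unique integer in the interval (m²/(m²−k*+1), m²/(m²−k*)]. -/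
/-- Reduction counting argument: with sufficiency of a size-`k` subset given by
`(m² − k)·V ≤ m²` and `k*` the minimal sufficient size (`k* ≥ 1`), one has
`m²/(m² − (k*−1)) < V ≤ m²/(m² − k*)`, `m² − k* ≥ m`, the gap between the two bounding
fractions is `< 1`, and hence `V` is the unique integer in `(m²/(m²−k*+1), m²/(m²−k*)]`. -/
theorem stmt16 (m : ℕ) (hm : 2 ≤ m) (V : ℤ) (hV1 : 1 ≤ V) (hVm : (V : ℝ) ≤ (m : ℝ))
    (kstar : ℕ) (hk1 : 1 ≤ kstar)
    (hsuff : ((m : ℝ) ^ 2 - (kstar : ℝ)) * (V : ℝ) ≤ (m : ℝ) ^ 2)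
    (hmin : ∀ k : ℕ, k < kstar → ¬ (((m : ℝ) ^ 2 - (k : ℝ)) * (V : ℝ) ≤ (m : ℝ) ^ 2)) :
    (m : ℝ) ^ 2 / ((m : ℝ) ^ 2 - ((kstar : ℝ) - 1)) < (V : ℝ) ∧
    (V : ℝ) ≤ (m : ℝ) ^ 2 / ((m : ℝ) ^ 2 - (kstar : ℝ)) ∧
    (m : ℝ) ≤ (m : ℝ) ^ 2 - (kstar : ℝ) ∧
    (m : ℝ) ^ 2 / ((m : ℝ) ^ 2 - (kstar : ℝ)) -
      (m : ℝ) ^ 2 / ((m : ℝ) ^ 2 - (kstar : ℝ) + 1) < 1 ∧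
    ∀ W : ℤ, (m : ℝ) ^ 2 / ((m : ℝ) ^ 2 - (kstar : ℝ) + 1) < (W : ℝ) →
      (W : ℝ) ≤ (m : ℝ) ^ 2 / ((m : ℝ) ^ 2 - (kstar : ℝ)) → W = V := by
  have hm1 : (1 : ℝ) ≤ (m : ℝ) := by exact_mod_cast Nat.one_le_of_lt hm
  have hV1' : (1 : ℝ) ≤ (V : ℝ) := by exact_mod_cast hV1
  -- strict inequality from minimality at k = kstar - 1
  have hstrict := hmin (kstar - 1) (Nat.sub_lt (by omega) one_pos)
  have hcast : ((kstar - 1 : ℕ) : ℝ) = (kstar : ℝ) - 1 := by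
    have : (1:ℕ) ≤ kstar := hk1
    push_cast [Nat.cast_sub this]
    ring
  rw [hcast] at hstrict
  push_neg at hstrict
  -- set a := m^2 - kstar
  set a : ℝ := (m : ℝ) ^ 2 - (kstar : ℝ) with ha
  have hstrict' : (m : ℝ) ^ 2 < (a + 1) * (V : ℝ) := by
    have : (m : ℝ) ^ 2 - ((kstar : ℝ) - 1) = a + 1 := by rw [ha]; ring
    rw [this] at hstrict; exact hstrict
  -- a + 1 > m
  have ham1 : (m : ℝ) < a + 1 := by nlinarith
  -- integrality: a ≥ m
  have ham : (m : ℝ) ≤ a := by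
    have hZ : (m : ℤ) < ((m : ℤ)^2 - (kstar : ℤ)) + 1 := by
      exact_mod_cast (by push_cast; linarith : ((m:ℤ):ℝ) < (((m : ℤ)^2 - (kstar : ℤ)) + 1 : ℤ))
    have : (m : ℤ) ≤ (m : ℤ)^2 - (kstar : ℤ) := by omega
    have h' : ((m:ℤ):ℝ) ≤ (((m : ℤ)^2 - (kstar : ℤ)) : ℤ) := by exact_mod_cast this
    push_cast at h'
    linarith
  have hapos : (0 : ℝ) < a := by linarith
  have ha1pos : (0 : ℝ) < a + 1 := by linarith
  have h1 : (m : ℝ) ^ 2 / (a + 1) < (V : ℝ) := by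
    rw [div_lt_iff₀ ha1pos]; nlinarith
  have h2 : (V : ℝ) ≤ (m : ℝ) ^ 2 / a := by
    rw [le_div_iff₀ hapos]; nlinarith
  have hgap : (m : ℝ) ^ 2 / a - (m : ℝ) ^ 2 / (a + 1) < 1 := by
    rw [div_sub_div _ _ (ne_of_gt hapos) (ne_of_gt ha1pos), div_lt_one (by positivity)]
    nlinarith
  have heq : (m : ℝ) ^ 2 - ((kstar : ℝ) - 1) = a + 1 := by rw [ha]; ring
  refine ⟨by rw [heq]; exact h1, h2, ham, hgap, ?_⟩
  intro W hW1 hW2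
  have hWV : (W : ℝ) < (V : ℝ) + 1 := by linarith
  have hVW : (V : ℝ) < (W : ℝ) + 1 := by linarith
  have : W < V + 1 := by exact_mod_cast hWV
  have : V < W + 1 := by exact_mod_cast hVW
  omega
end
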